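/- On L²(ℝ) ⊕ L²(ℝ) with ρ(u) = e^{iβx} ⊕ e^{iβx}, ρ(p) = [[0, e^{−2αP}],[e^{−2αP}, 0]], and ρ(x) = [[0, 2sin(β(x−αi))·e^{2αP}],[e^{2αP}·2sin(β(x+αi)), 0]], where α, β ∈ ℝ, αβ = γ, q = e^{2γ}: on the invariant dense core D₀ ⊕ D₀, the relation ρ(p)ρ(x) = i q^{1/2} ρ(u)^{−1} − i q^{−1/2} ρ(u) holds. -/

import Mathlib

/-!
On the first component `e^{-2αP}` and `e^{2αP}` cancel; on the second, conjugating the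
multiplication by `2 sin(β(x - αi))` by `e^{2αP}` shifts it to `2 sin(β(x + αi))`. So `ρ(p)ρ(x)` is
multiplication by `2 sin(β(x + αi)) = i e^{αβ} e^{-iβx} - i e^{-αβ} e^{iβx}` on both components.
-/

open Complex

/-- The operator `e^{sP}` acting on holomorphic functions: `(e^{sP} f)(z) = f(z - si)`. -/
def expP (s : ℝ) (f : ℂ → ℂ) : ℂ → ℂ := fun z => f (z - s * Complex.I)

/-- `ρ(p) = [[0, e^{-2αP}], [e^{-2αP}, 0]]` on pairs of functions. -/
def rhoP (α : ℝ) (η : (ℂ → ℂ) × (ℂ → ℂ)) : (ℂ → ℂ) × (ℂ → ℂ) :=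
  (expP (-(2 * α)) η.2, expP (-(2 * α)) η.1)

/-- `ρ(x) = [[0, 2sin(β(x-αi))·e^{2αP}], [e^{2αP}·2sin(β(x+αi)), 0]]` on pairs. -/
noncomputable def rhoX (α β : ℝ) (η : (ℂ → ℂ) × (ℂ → ℂ)) : (ℂ → ℂ) × (ℂ → ℂ) :=
  (fun z => 2 * Complex.sin (β * (z - α * Complex.I)) * expP (2 * α) η.2 z,
   expP (2 * α) (fun z => 2 * Complex.sin (β * (z + α * Complex.I)) * η.1 z))

theorem expP_neg_expP (s : ℝ) (f : ℂ → ℂ) : expP (-s) (expP s f) = f := by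
  funext z
  simp only [expP, ofReal_neg]
  ring_nf

theorem two_mul_sin_mul_add_mul_I (α β z : ℂ) :
    2 * sin (β * (z + α * I)) =
      I * exp (α * β) * exp (-(I * β * z)) -
        I * exp (-(α * β)) * exp (I * β * z) := by
  have h_neg : -(β * (z + α * I)) * I = α * β + -(I * β * z) := by
    linear_combination -(α * β) * I_sq
  have h_pos : β * (z + α * I) * I = -(α * β) + I * β * z := by
    linear_combination (α * β) * I_sq
  rw [two_sin, h_neg, h_pos, exp_add, exp_add]
  ring

section

variable (α β : ℝ) (η : (ℂ → ℂ) × (ℂ → ℂ))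

theorem rhoP_rhoX_fst (z : ℂ) :
    (rhoP α (rhoX α β η)).1 z = 2 * sin (β * (z + α * I)) * η.1 z := by
  simp only [rhoP, rhoX, expP_neg_expP]

theorem rhoP_rhoX_snd (z : ℂ) :
    (rhoP α (rhoX α β η)).2 z = 2 * sin (β * (z + α * I)) * η.2 z := by
  simp only [rhoP, rhoX, expP, ofReal_neg, ofReal_mul, ofReal_ofNat]
  ring_nf

end

/-- `s` stands for `q^{1/2} = e^{αβ}`, and `ρ(u)` acts on each component as multiplication by
`e^{iβx}`. -/
theorem rho_p_rho_x_relation_general (α β s : ℝ) (hs : s = Real.exp (α * β)) (η₁ η₂ : ℂ → ℂ) (x : ℝ) :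
    ((rhoP α (rhoX α β (η₁, η₂))).1 (x : ℂ) =
      Complex.I * s * Complex.exp (-(Complex.I * β * x)) * η₁ (x : ℂ) -
        Complex.I * (s : ℂ)⁻¹ * Complex.exp (Complex.I * β * x) * η₁ (x : ℂ)) ∧
    ((rhoP α (rhoX α β (η₁, η₂))).2 (x : ℂ) =
      Complex.I * s * Complex.exp (-(Complex.I * β * x)) * η₂ (x : ℂ) -
        Complex.I * (s : ℂ)⁻¹ * Complex.exp (Complex.I * β * x) * η₂ (x : ℂ)) := by
  subst hs
  simp only [rhoP_rhoX_fst, rhoP_rhoX_snd, two_mul_sin_mul_add_mul_I, ← ofReal_mul,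
    ← ofReal_neg, ← ofReal_exp, Real.exp_neg, ofReal_inv]
  constructor <;> ring

/-- On the core `D₀ ⊕ D₀`, `ρ(p)ρ(x) = i q^{1/2} ρ(u)⁻¹ − i q^{-1/2} ρ(u)`, where
`ρ(u) = e^{iβx} ⊕ e^{iβx}`, `q^{1/2} = e^{αβ}` and `q = e^{2αβ}`: componentwise, for each
component `η_j` and real `x`,
`(ρ(p)ρ(x)η)_j(x) = i q^{1/2} e^{-iβx} η_j(x) − i q^{-1/2} e^{iβx} η_j(x)`. -/
theorem rho_p_rho_x_relation (α β q s : ℝ) (hq : q = Real.exp (2 * (α * β)))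
    (hs : s = Real.exp (α * β)) (η₁ η₂ : ℂ → ℂ) (x : ℝ) :
    ((rhoP α (rhoX α β (η₁, η₂))).1 (x : ℂ) =
      Complex.I * s * Complex.exp (-(Complex.I * β * x)) * η₁ (x : ℂ) -
        Complex.I * (s : ℂ)⁻¹ * Complex.exp (Complex.I * β * x) * η₁ (x : ℂ)) ∧
    ((rhoP α (rhoX α β (η₁, η₂))).2 (x : ℂ) =
      Complex.I * s * Complex.exp (-(Complex.I * β * x)) * η₂ (x : ℂ) -
        Complex.I * (s : ℂ)⁻¹ * Complex.exp (Complex.I * β * x) * η₂ (x : ℂ)) :=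
  rho_p_rho_x_relation_general α β s hs η₁ η₂ x
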